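/- For any bipartite quantum state ρ on ℂ^{d_A}⊗ℂ^{d_B} and any natural number n ≥ 1, the tempered negativity is supermultiplicative under tensor powers: N_τ(ρ^{⊗n}) ≥ N_τ(ρ)^n. -/

import Mathlib

open scoped BigOperators ComplexOrder

noncomputable section

/-- Bipartite matrices on `ℂ^{IA} ⊗ ℂ^{IB}`, indexed by pairs. -/
abbrev BMat (IA IB : Type) : Type := Matrix (IA × IB) (IA × IB) ℂ

/-- Partial transpose on the `B` system: `(X^{T_B})_{(i,j),(k,l)} = X_{(i,l),(k,j)}`. -/
def ptB {IA IB : Type} (X : BMat IA IB) : BMat IA IB :=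
  fun p q => X (p.1, q.2) (q.1, p.2)

/-- Trace norm `‖X‖₁ = tr √(X† X)`. -/
noncomputable def traceNorm {n : Type} [Fintype n] [DecidableEq n]
    (X : Matrix n n ℂ) : ℝ :=
  (((Matrix.posSemidef_conjTranspose_mul_self X).1.eigenvectorUnitary.1 *
    Matrix.diagonal (((↑) : ℝ → ℂ) ∘ Real.sqrt ∘ (Matrix.posSemidef_conjTranspose_mul_self X).1.eigenvalues) *
    (star (Matrix.posSemidef_conjTranspose_mul_self X).1.eigenvectorUnitary : Matrix n n ℂ)).trace).re

/-- Operator norm (largest singular value). -/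
noncomputable def opNorm {n : Type} [Fintype n] [DecidableEq n] (X : Matrix n n ℂ) : ℝ :=
  ‖Matrix.toEuclideanCLM (𝕜 := ℂ) X‖

/-- Logarithmic negativity `E_N(X) = log₂ ‖X^{T_B}‖₁`. -/
noncomputable def EN {IA IB : Type} [Fintype IA] [Fintype IB] [DecidableEq IA] [DecidableEq IB]
    (X : BMat IA IB) : ℝ :=
  Real.logb 2 (traceNorm (ptB X))

/-- The extension `id_k ⊗ f` of a map on matrices, acting blockwise. -/
def extMap {I J : Type} (f : Matrix I I ℂ → Matrix J J ℂ) (k : ℕ)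
    (M : Matrix (Fin k × I) (Fin k × I) ℂ) : Matrix (Fin k × J) (Fin k × J) ℂ :=
  fun p q => f (fun i i' => M (p.1, i) (q.1, i')) p.2 q.2

/-- A map on matrices is completely positive if all its extensions `id_k ⊗ f`
map positive semidefinite matrices to positive semidefinite matrices. -/
def CompletelyPositive {I J : Type} [Fintype I] [Fintype J]
    (f : Matrix I I ℂ → Matrix J J ℂ) : Prop :=
  ∀ (k : ℕ) (M : Matrix (Fin k × I) (Fin k × I) ℂ), M.PosSemidef → (extMap f k M).PosSemidef

/-- A PPTq operation: a Hermitian-preserving, trace-preserving linear map `N`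
such that `T_{B'} ∘ N ∘ T_B` is completely positive. -/
def IsPPTq {IA IB JA JB : Type} [Fintype IA] [Fintype IB] [Fintype JA] [Fintype JB]
    (N : BMat IA IB →ₗ[ℂ] BMat JA JB) : Prop :=
  (∀ X : BMat IA IB, X.IsHermitian → (N X).IsHermitian) ∧
  (∀ X : BMat IA IB, (N X).trace = X.trace) ∧
  CompletelyPositive (fun X => ptB (N (ptB X)))

/-- A bipartite quasi-state: Hermitian with trace one. -/
def IsQuasiState {IA IB : Type} [Fintype IA] [Fintype IB] (ρ : BMat IA IB) : Prop :=
  ρ.IsHermitian ∧ ρ.trace = 1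

/-- A bipartite quantum state: positive semidefinite with trace one. -/
def IsState {IA IB : Type} [Fintype IA] [Fintype IB] (ρ : BMat IA IB) : Prop :=
  ρ.PosSemidef ∧ ρ.trace = 1

/-- The maximally entangled state `Φ^d = (1/d) ∑_{i,j} |ii⟩⟨jj|`. -/
noncomputable def MES (d : ℕ) : BMat (Fin d) (Fin d) :=
  fun p q => if p.1 = p.2 ∧ q.1 = q.2 then (1 : ℂ) / d else 0

/-- `n`-fold tensor (Kronecker) power, with all `A` factors grouped against all `B` factors. -/
def tensorPow {IA IB : Type} (ρ : BMat IA IB) (n : ℕ) :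
    BMat (Fin n → IA) (Fin n → IB) :=
  fun p q => ∏ i : Fin n, ρ (p.1 i, p.2 i) (q.1 i, q.2 i)

/-- Tensor (Kronecker) product of two bipartite matrices, grouping `A` systems together
and `B` systems together. -/
def tensorMul {IA IB JA JB : Type} (ρ : BMat IA IB) (σ : BMat JA JB) :
    BMat (IA × JA) (IB × JB) :=
  fun p q => ρ (p.1.1, p.2.1) (q.1.1, q.2.1) * σ (p.1.2, p.2.2) (q.1.2, q.2.2)

/-- One-shot exact distillable entanglement under PPTq operations. -/
noncomputable def oneShotDistill {IA IB : Type} [Fintype IA] [Fintype IB]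
    (ρ : BMat IA IB) : ℝ :=
  sSup { x : ℝ | ∃ d : ℕ, 0 < d ∧ x = Real.logb 2 d ∧
    ∃ Λ : BMat IA IB →ₗ[ℂ] BMat (Fin d) (Fin d), IsPPTq Λ ∧ Λ ρ = MES d }

/-- One-shot exact entanglement cost under PPTq operations. -/
noncomputable def oneShotCost {IA IB : Type} [Fintype IA] [Fintype IB]
    (ρ : BMat IA IB) : ℝ :=
  sInf { x : ℝ | ∃ d : ℕ, 0 < d ∧ x = Real.logb 2 d ∧
    ∃ Λ : BMat (Fin d) (Fin d) →ₗ[ℂ] BMat IA IB, IsPPTq Λ ∧ Λ (MES d) = ρ }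

/-- The one-shot distillation error for `n` copies towards `Φ^d`, optimized over PPTq operations. -/
noncomputable def distillErr {IA IB : Type} [Fintype IA] [Fintype IB]
    [DecidableEq IA] [DecidableEq IB] (ρ : BMat IA IB) (n d : ℕ) : ℝ :=
  sInf { e : ℝ | ∃ Λ : BMat (Fin n → IA) (Fin n → IB) →ₗ[ℂ] BMat (Fin d) (Fin d),
    IsPPTq Λ ∧ e = traceNorm (Λ (tensorPow ρ n) - MES d) }

/-- The one-shot dilution error for preparing `n` copies from `Φ^d`, optimized over PPTq operations. -/
noncomputable def costErr {IA IB : Type} [Fintype IA] [Fintype IB]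
    [DecidableEq IA] [DecidableEq IB] (ρ : BMat IA IB) (n d : ℕ) : ℝ :=
  sInf { e : ℝ | ∃ Λ : BMat (Fin d) (Fin d) →ₗ[ℂ] BMat (Fin n → IA) (Fin n → IB),
    IsPPTq Λ ∧ e = traceNorm (tensorPow ρ n - Λ (MES d)) }

/-- Distillable entanglement under PPTq operations (asymptotically vanishing error). -/
noncomputable def EDppt {IA IB : Type} [Fintype IA] [Fintype IB]
    [DecidableEq IA] [DecidableEq IB] (ρ : BMat IA IB) : ℝ :=
  sSup { r : ℝ | Filter.Tendsto (fun n : ℕ => distillErr ρ n (2 ^ ⌊r * n⌋₊))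
    Filter.atTop (nhds 0) }

/-- Entanglement cost under PPTq operations (asymptotically vanishing error). -/
noncomputable def ECppt {IA IB : Type} [Fintype IA] [Fintype IB]
    [DecidableEq IA] [DecidableEq IB] (ρ : BMat IA IB) : ℝ :=
  sInf { r : ℝ | Filter.Tendsto (fun n : ℕ => costErr ρ n (2 ^ ⌈r * n⌉₊))
    Filter.atTop (nhds 0) }

/-- Tempered negativity `N_τ(σ | ρ)`. -/
noncomputable def temperedNeg {IA IB : Type} [Fintype IA] [Fintype IB]
    [DecidableEq IA] [DecidableEq IB] (σ ρ : BMat IA IB) : ℝ :=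
  sSup { t : ℝ | ∃ X : Matrix (IA × IB) (IA × IB) ℂ, X.IsHermitian ∧
    opNorm (ptB X) ≤ 1 ∧ (X * ρ).trace = (opNorm X : ℂ) ∧ (X * σ).trace = (t : ℂ) }

/-- Asymptotic exact conversion rate under PPTq operations. -/
noncomputable def convRate {IA IB JA JB : Type} [Fintype IA] [Fintype IB]
    [Fintype JA] [Fintype JB]
    (ρ : BMat IA IB) (σ : BMat JA JB) : ℝ :=
  sSup { r : ℝ | 0 ≤ r ∧ ∀ᶠ n : ℕ in Filter.atTop,
    ∃ Λ : BMat (Fin n → IA) (Fin n → IB) →ₗ[ℂ]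
          BMat (Fin ⌊r * n⌋₊ → JA) (Fin ⌊r * n⌋₊ → JB),
      IsPPTq Λ ∧ Λ (tensorPow ρ n) = tensorPow σ ⌊r * n⌋₊ }

/-!
If `X` is feasible for `N_τ(ρ)` (Hermitian, `‖X^{T_B}‖ ≤ 1`, `tr Xρ = ‖X‖`), then `X^{⊗n}` is
feasible for `ρ^{⊗n}` with value `‖X‖^n`: partial transposes, products and traces factor over
tensor powers, and `‖X^{⊗n}‖ = ‖X‖^n`. Here `≤` holds for every Hermitian matrix by a
Gelfand-formula argument, and `≥` follows from `‖X‖^n = tr(X^{⊗n} ρ^{⊗n}) ≤ ‖X^{⊗n}‖`, as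
`ρ^{⊗n}` is a state. Taking suprema gives `N_τ(ρ)^n ≤ N_τ(ρ^{⊗n})`.
-/

open scoped Matrix

section TensorPow

variable {IA IB : Type}

lemma ptB_tensorPow (X : BMat IA IB) (n : ℕ) : ptB (tensorPow X n) = tensorPow (ptB X) n := rfl

lemma ptB_one [DecidableEq IA] [DecidableEq IB] : ptB (1 : BMat IA IB) = 1 := by
  ext p q
  simp only [ptB, Matrix.one_apply, Prod.ext_iff]
  grind

lemma Matrix.IsHermitian.ptB {X : BMat IA IB} (hX : X.IsHermitian) : (ptB X).IsHermitian :=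
  Matrix.IsHermitian.ext fun p q => hX.apply (p.1, q.2) (q.1, p.2)

lemma conjTranspose_tensorPow (X : BMat IA IB) (n : ℕ) :
    (tensorPow X n)ᴴ = tensorPow Xᴴ n := by
  ext p q
  simp [tensorPow, Matrix.conjTranspose_apply, star_prod]

lemma Matrix.IsHermitian.tensorPow {X : BMat IA IB} (hX : X.IsHermitian) (n : ℕ) :
    (_root_.tensorPow X n).IsHermitian := by
  rw [Matrix.IsHermitian, conjTranspose_tensorPow, hX.eq]

lemma tensorPow_mul_tensorPow [Fintype IA] [Fintype IB] (X Y : BMat IA IB) (n : ℕ) :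
    tensorPow X n * tensorPow Y n = tensorPow (X * Y) n := by
  ext p q
  simp only [Matrix.mul_apply, tensorPow, Fintype.prod_sum, ← Finset.prod_mul_distrib]
  exact (Equiv.arrowProdEquivProdArrow (Fin n) (fun _ => IA) (fun _ => IB)).sum_comp
    (fun r => ∏ i, X (p.1 i, p.2 i) (r.1 i, r.2 i) * Y (r.1 i, r.2 i) (q.1 i, q.2 i)) |>.symm

lemma trace_tensorPow [Fintype IA] [Fintype IB] (X : BMat IA IB) (n : ℕ) :
    (tensorPow X n).trace = X.trace ^ n := by
  simp only [Matrix.trace, Matrix.diag]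
  rw [← Fin.prod_const, Fintype.prod_sum]
  exact (Equiv.arrowProdEquivProdArrow (Fin n) (fun _ => IA) (fun _ => IB)).sum_comp
    (fun r => ∏ i, X (r.1 i, r.2 i) (r.1 i, r.2 i)) |>.symm

lemma tensorPow_one [DecidableEq IA] [DecidableEq IB] (n : ℕ) :
    tensorPow (1 : BMat IA IB) n = 1 := by
  ext p q
  simp only [tensorPow, Matrix.one_apply, Finset.prod_boole, Finset.mem_univ, true_implies,
    Prod.ext_iff, funext_iff, forall_and]

lemma tensorPow_pow [Fintype IA] [Fintype IB] [DecidableEq IA] [DecidableEq IB]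
    (X : BMat IA IB) (n m : ℕ) :
    tensorPow X n ^ m = tensorPow (X ^ m) n := by
  induction m with
  | zero => simp [tensorPow_one]
  | succ m ih => rw [pow_succ, ih, tensorPow_mul_tensorPow, ← pow_succ]

lemma Matrix.PosSemidef.tensorPow [Fintype IA] [Fintype IB] {ρ : BMat IA IB}
    (hρ : ρ.PosSemidef) (n : ℕ) :
    (_root_.tensorPow ρ n).PosSemidef := by
  classical
  open scoped MatrixOrder in
  obtain ⟨B, rfl⟩ := CStarAlgebra.nonneg_iff_eq_star_mul_self.mp hρ.nonneg
  rw [Matrix.star_eq_conjTranspose, ← tensorPow_mul_tensorPow, ← conjTranspose_tensorPow]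
  exact Matrix.posSemidef_conjTranspose_mul_self _

end TensorPow

section OperatorNorm

variable {κ : Type} [Fintype κ] [DecidableEq κ]

lemma norm_apply_le_opNorm (A : Matrix κ κ ℂ) (i j : κ) : ‖A i j‖ ≤ opNorm A :=
  calc ‖A i j‖ = ‖Matrix.toEuclideanCLM (𝕜 := ℂ) A (EuclideanSpace.single j 1) i‖ := by simp
    _ ≤ ‖Matrix.toEuclideanCLM (𝕜 := ℂ) A (EuclideanSpace.single j 1)‖ := PiLp.norm_apply_le _ _
    _ ≤ opNorm A * ‖EuclideanSpace.single j (1 : ℂ)‖ := ContinuousLinearMap.le_opNorm _ _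
    _ = opNorm A := by simp

lemma opNorm_one [Nonempty κ] : opNorm (1 : Matrix κ κ ℂ) = 1 := by
  simp [opNorm]

open scoped Matrix.Norms.L2Operator MatrixOrder

lemma Matrix.IsHermitian.opNorm_pow_two_pow {A : Matrix κ κ ℂ} (hA : A.IsHermitian) (k : ℕ) :
    opNorm (A ^ 2 ^ k) = opNorm A ^ 2 ^ k :=
  hA.isSelfAdjoint.norm_pow_two_pow k

lemma Matrix.PosSemidef.trace_mul_nonneg {P σ : Matrix κ κ ℂ} (hP : P.PosSemidef)
    (hσ : σ.PosSemidef) : 0 ≤ (P * σ).trace := by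
  obtain ⟨B, rfl⟩ := CStarAlgebra.nonneg_iff_eq_star_mul_self.mp hσ.nonneg
  rw [Matrix.star_eq_conjTranspose, ← Matrix.mul_assoc, Matrix.trace_mul_comm,
    ← Matrix.mul_assoc]
  exact (hP.mul_mul_conjTranspose_same B).trace_nonneg

lemma Matrix.IsHermitian.re_trace_mul_le {A σ : Matrix κ κ ℂ} (hA : A.IsHermitian)
    (hσ : σ.PosSemidef) : (A * σ).trace.re ≤ opNorm A * σ.trace.re := by
  have hle : (algebraMap ℝ _ (opNorm A) - A).PosSemidef :=
    Matrix.le_iff.mp hA.isSelfAdjoint.le_algebraMap_norm_self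
  have := (Complex.nonneg_iff.mp (hle.trace_mul_nonneg hσ)).1
  simpa [Matrix.sub_mul, Algebra.algebraMap_eq_smul_one, Matrix.trace_smul] using this

end OperatorNorm

lemma le_of_forall_pow_two_pow_le_mul {a b C : ℝ} (hb : 0 ≤ b)
    (h : ∀ k : ℕ, a ^ 2 ^ k ≤ C * b ^ 2 ^ k) : a ≤ b := by
  rcases hb.eq_or_lt with rfl | hb
  · simpa using h 0
  by_contra! hab
  have hr : 1 < a / b := (one_lt_div hb).2 hab
  obtain ⟨m, hm⟩ := pow_unbounded_of_one_lt C hr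
  have hC : (a / b) ^ 2 ^ m ≤ C := by
    rw [div_pow, div_le_iff₀ (by positivity)]
    exact h m
  exact hm.not_ge ((pow_le_pow_right₀ hr.le Nat.lt_two_pow_self.le).trans hC)

section Frobenius

attribute [local instance] Matrix.frobeniusNormedAddCommGroup

lemma frobenius_norm_sq_eq_sum {m n : Type} [Fintype m] [Fintype n] (A : Matrix m n ℂ) :
    ‖A‖ ^ 2 = ∑ i, ∑ j, ‖A i j‖ ^ 2 := by
  rw [Matrix.frobenius_norm_def, ← Real.sqrt_eq_rpow, Real.sq_sqrt (by positivity)]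
  simp only [Real.rpow_two]

lemma frobenius_norm_sq_eq_trace {m n : Type} [Fintype m] [Fintype n] (A : Matrix m n ℂ) :
    ((‖A‖ ^ 2 : ℝ) : ℂ) = (Aᴴ * A).trace := by
  rw [frobenius_norm_sq_eq_sum, Finset.sum_comm]
  push_cast
  simp only [Matrix.trace, Matrix.diag, Matrix.mul_apply, Matrix.conjTranspose_apply,
    RCLike.star_def, Complex.conj_mul']

lemma frobenius_norm_le_card_mul {κ : Type} [Fintype κ] (A : Matrix κ κ ℂ) {c : ℝ} (hc : 0 ≤ c)
    (h : ∀ i j, ‖A i j‖ ≤ c) : ‖A‖ ≤ Fintype.card κ * c := by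
  refine (sq_le_sq₀ (norm_nonneg _) (by positivity)).mp ?_
  calc ‖A‖ ^ 2 ≤ ∑ _i : κ, ∑ _j : κ, c ^ 2 := by
        rw [frobenius_norm_sq_eq_sum]
        gcongr with i _ j
        exact h i j
    _ = (Fintype.card κ * c) ^ 2 := by simp only [Finset.sum_const, Finset.card_univ]; ring

lemma frobenius_norm_tensorPow {IA IB : Type} [Fintype IA] [Fintype IB] (X : BMat IA IB)
    (n : ℕ) : ‖tensorPow X n‖ = ‖X‖ ^ n := by
  have h : ((‖tensorPow X n‖ ^ 2 : ℝ) : ℂ) = (((‖X‖ ^ n) ^ 2 : ℝ) : ℂ) := by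
    rw [frobenius_norm_sq_eq_trace, conjTranspose_tensorPow, tensorPow_mul_tensorPow,
      trace_tensorPow, ← frobenius_norm_sq_eq_trace]
    push_cast
    ring
  exact (sq_eq_sq₀ (norm_nonneg _) (by positivity)).mp (mod_cast h)

variable {κ : Type} [Fintype κ] [DecidableEq κ]

lemma opNorm_le_frobenius_norm (A : Matrix κ κ ℂ) : opNorm A ≤ ‖A‖ := by
  refine ContinuousLinearMap.opNorm_le_bound _ (norm_nonneg _) fun x => ?_
  rw [← Matrix.frobenius_norm_replicateCol (ι := Unit),
    ← Matrix.frobenius_norm_replicateCol (ι := Unit), Matrix.ofLp_toEuclideanCLM,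
    Matrix.replicateCol_mulVec]
  exact Matrix.frobenius_norm_mul _ _

variable {IA IB : Type} [Fintype IA] [Fintype IB] [DecidableEq IA] [DecidableEq IB]

/-- A Gelfand-formula argument: the Frobenius norm is multiplicative on tensor powers and within
a dimension factor of the operator norm, and `‖X ^ 2 ^ k‖ = ‖X‖ ^ 2 ^ k` lets `2 ^ k`-th roots
remove that factor as `k → ∞`. -/
lemma opNorm_tensorPow_le {X : BMat IA IB} (hX : X.IsHermitian) (n : ℕ) :
    opNorm (tensorPow X n) ≤ opNorm X ^ n := by
  set N : ℝ := (Fintype.card (IA × IB) : ℝ)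
  refine le_of_forall_pow_two_pow_le_mul (C := N ^ n) (pow_nonneg (norm_nonneg _) n) fun k => ?_
  calc opNorm (tensorPow X n) ^ 2 ^ k = opNorm (tensorPow (X ^ 2 ^ k) n) := by
        rw [← (hX.tensorPow n).opNorm_pow_two_pow, tensorPow_pow]
    _ ≤ ‖tensorPow (X ^ 2 ^ k) n‖ := opNorm_le_frobenius_norm _
    _ = ‖X ^ 2 ^ k‖ ^ n := frobenius_norm_tensorPow _ _
    _ ≤ (N * opNorm (X ^ 2 ^ k)) ^ n := by
        gcongr
        exact frobenius_norm_le_card_mul _ (norm_nonneg _) (norm_apply_le_opNorm _)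
    _ = N ^ n * (opNorm X ^ n) ^ 2 ^ k := by
        rw [hX.opNorm_pow_two_pow]
        ring

lemma opNorm_le_card_of_opNorm_ptB_le_one {X : BMat IA IB} (hX : opNorm (ptB X) ≤ 1) :
    opNorm X ≤ Fintype.card (IA × IB) := by
  have hentry (p q : IA × IB) : ‖X p q‖ ≤ 1 :=
    (norm_apply_le_opNorm (ptB X) (p.1, q.2) (q.1, p.2)).trans hX
  calc opNorm X ≤ ‖X‖ := opNorm_le_frobenius_norm X
    _ ≤ Fintype.card (IA × IB) * 1 := frobenius_norm_le_card_mul X zero_le_one hentry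
    _ = Fintype.card (IA × IB) := mul_one _

end Frobenius

lemma csSup_pow_le_csSup {S T : Set ℝ} (n : ℕ) (hS : S.Nonempty) (hS₀ : ∀ t ∈ S, 0 ≤ t)
    (hSb : BddAbove S) (hT : BddAbove T) (h : ∀ t ∈ S, t ^ n ∈ T) : sSup S ^ n ≤ sSup T := by
  have hmono : MonotoneOn (· ^ n) S := fun a ha _ _ hab => pow_le_pow_left₀ (hS₀ a ha) hab n
  rw [hmono.map_csSup_of_continuousWithinAt (continuous_pow n).continuousWithinAt hS hSb]
  exact csSup_le_csSup hT (hS.image _) (Set.image_subset_iff.mpr h)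

section TemperedNegativity

variable {IA IB : Type} [Fintype IA] [Fintype IB] [DecidableEq IA] [DecidableEq IB]

def temperedWitnesses (ρ : BMat IA IB) : Set (BMat IA IB) :=
  { X | X.IsHermitian ∧ opNorm (ptB X) ≤ 1 ∧ (X * ρ).trace = (opNorm X : ℂ) }

lemma temperedNeg_self_eq_sSup (ρ : BMat IA IB) :
    temperedNeg ρ ρ = sSup (opNorm '' temperedWitnesses ρ) := by
  unfold temperedNeg
  congr 1
  ext t
  constructor
  · rintro ⟨X, hH, hpt, htr, ht⟩
    exact ⟨X, ⟨hH, hpt, htr⟩, by exact_mod_cast htr.symm.trans ht⟩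
  · rintro ⟨X, ⟨hH, hpt, htr⟩, rfl⟩
    exact ⟨X, hH, hpt, htr, htr⟩

lemma one_mem_temperedWitnesses [Nonempty (IA × IB)] {ρ : BMat IA IB} (hρ : ρ.trace = 1) :
    1 ∈ temperedWitnesses ρ :=
  ⟨Matrix.isHermitian_one, by rw [ptB_one, opNorm_one], by rw [one_mul, hρ, opNorm_one]; simp⟩

lemma bddAbove_opNorm_image_temperedWitnesses (ρ : BMat IA IB) :
    BddAbove (opNorm '' temperedWitnesses ρ) :=
  ⟨Fintype.card (IA × IB), by
    rintro _ ⟨X, hX, rfl⟩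
    exact opNorm_le_card_of_opNorm_ptB_le_one hX.2.1⟩

variable {ρ X : BMat IA IB}

lemma opNorm_tensorPow_of_mem_temperedWitnesses (hρ : IsState ρ)
    (hX : X ∈ temperedWitnesses ρ) (n : ℕ) : opNorm (tensorPow X n) = opNorm X ^ n := by
  refine le_antisymm (opNorm_tensorPow_le hX.1 n) ?_
  have htr : (tensorPow X n * tensorPow ρ n).trace = ((opNorm X ^ n : ℝ) : ℂ) := by
    rw [tensorPow_mul_tensorPow, trace_tensorPow, hX.2.2]
    push_cast
    rfl
  have := (hX.1.tensorPow n).re_trace_mul_le (hρ.1.tensorPow n)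
  rwa [htr, trace_tensorPow, hρ.2, one_pow, Complex.ofReal_re, Complex.one_re, mul_one] at this

lemma tensorPow_mem_temperedWitnesses (hρ : IsState ρ) (hX : X ∈ temperedWitnesses ρ)
    (n : ℕ) : tensorPow X n ∈ temperedWitnesses (tensorPow ρ n) := by
  refine ⟨hX.1.tensorPow n, ?_, ?_⟩
  · rw [ptB_tensorPow]
    exact (opNorm_tensorPow_le hX.1.ptB n).trans (pow_le_one₀ (norm_nonneg _) hX.2.1)
  · rw [tensorPow_mul_tensorPow, trace_tensorPow, hX.2.2,
      opNorm_tensorPow_of_mem_temperedWitnesses hρ hX]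
    push_cast
    rfl

end TemperedNegativity

theorem temperedNeg_tensorPow_ge_general {dA dB : ℕ}
    (ρ : BMat (Fin dA) (Fin dB)) (hρ : IsState ρ) (n : ℕ) :
    temperedNeg ρ ρ ^ n ≤ temperedNeg (tensorPow ρ n) (tensorPow ρ n) := by
  have : Nonempty (Fin dA × Fin dB) := by
    obtain ⟨p, -, -⟩ := Finset.exists_ne_zero_of_sum_ne_zero (hρ.2 ▸ one_ne_zero : ρ.trace ≠ 0)
    exact ⟨p⟩
  rw [temperedNeg_self_eq_sSup, temperedNeg_self_eq_sSup]
  refine csSup_pow_le_csSup n ⟨1, 1, one_mem_temperedWitnesses hρ.2, opNorm_one⟩ ?_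
    (bddAbove_opNorm_image_temperedWitnesses _) (bddAbove_opNorm_image_temperedWitnesses _) ?_
  · rintro _ ⟨X, -, rfl⟩
    exact norm_nonneg _
  · rintro _ ⟨X, hX, rfl⟩
    exact ⟨tensorPow X n, tensorPow_mem_temperedWitnesses hρ hX n,
      opNorm_tensorPow_of_mem_temperedWitnesses hρ hX n⟩

/-- The tempered negativity is supermultiplicative under tensor
powers: `N_τ(ρ^{⊗n}) ≥ N_τ(ρ)^n`. -/
theorem temperedNeg_tensorPow_ge {dA dB : ℕ}
    (ρ : BMat (Fin dA) (Fin dB)) (hρ : IsState ρ) (n : ℕ) (hn : 1 ≤ n) :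
    temperedNeg ρ ρ ^ n ≤ temperedNeg (tensorPow ρ n) (tensorPow ρ n) :=
  temperedNeg_tensorPow_ge_general ρ hρ n

end
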